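/- Let φ, φ* be key polynomials for a valuation μ on K[x], and γ, γ* ∈ Λ∞ with μ(φ) < γ, μ(φ*) < γ*. Then the augmented valuations [μ; φ, γ] and [μ; φ*, γ*] coincide if and only if deg φ = deg φ*, γ = γ*, and μ(φ* − φ) ≥ γ. -/

import Mathlib

open Polynomial Finset

variable {K : Type*} [Field K] {Λ : Type*} [AddCommGroup Λ] [LinearOrder Λ] [IsOrderedAddMonoid Λ]

/-- `v` is a valuation on the field `K` with values in `Λ∞ = WithTop Λ`. -/
def IsVal (v : K → WithTop Λ) : Prop :=
  (∀ a, v a = ⊤ ↔ a = 0) ∧ v 1 = 0 ∧ (∀ a b, v (a * b) = v a + v b) ∧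
    (∀ a b, min (v a) (v b) ≤ v (a + b))

/-- `μ` is a valuation on `K[x]` extending `v`. -/
def ExtVal (v : K → WithTop Λ) (μ : Polynomial K → WithTop Λ) : Prop :=
  (∀ f g, μ (f * g) = μ f + μ g) ∧ (∀ f g, min (μ f) (μ g) ≤ μ (f + g)) ∧
    (∀ a, μ (Polynomial.C a) = v a)

/-- `h` divides `g` μ-equivalently (`h ∣_μ g`): there is `q` with `μ(g - q h) > μ(g)`. -/
def MuDvd (μ : Polynomial K → WithTop Λ) (h g : Polynomial K) : Prop :=
  ∃ q : Polynomial K, μ g < μ (g - q * h)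

/-- `φ` is μ-minimal: `φ ∤_μ f` for every nonzero `f` of degree less than `deg φ`. -/
def MuMinimal (μ : Polynomial K → WithTop Λ) (φ : Polynomial K) : Prop :=
  ∀ f : Polynomial K, f ≠ 0 → f.degree < φ.degree → ¬ MuDvd μ φ f

/-- `φ` is μ-irreducible: the principal ideal generated by `in_μ φ` in the graded
algebra is a nonzero prime ideal (stated via μ-divisibility). -/
def MuIrreducible (μ : Polynomial K → WithTop Λ) (φ : Polynomial K) : Prop :=
  μ φ ≠ ⊤ ∧ ¬ MuDvd μ φ 1 ∧
    ∀ f g : Polynomial K, MuDvd μ φ (f * g) → MuDvd μ φ f ∨ MuDvd μ φ g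

/-- A (MacLane–Vaquié) key polynomial for `μ`. -/
def KeyPoly (μ : Polynomial K → WithTop Λ) (φ : Polynomial K) : Prop :=
  φ.Monic ∧ MuMinimal μ φ ∧ MuIrreducible μ φ

/-- `μ'` is the augmented valuation `[μ; φ, γ]`: on φ-expansions
`f = Σ a_s φ^s` (with `deg a_s < deg φ`), `μ' f = min_s (μ(a_s) + s·γ)`. -/
def AugVal (μ : Polynomial K → WithTop Λ) (φ : Polynomial K) (γ : WithTop Λ)
    (μ' : Polynomial K → WithTop Λ) : Prop :=
  ∀ (f : Polynomial K) (n : ℕ) (a : ℕ → Polynomial K),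
    (∀ s, (a s).degree < φ.degree) →
    f = ∑ s ∈ Finset.range n, a s * φ ^ s →
    μ' f = (Finset.range n).inf fun s => μ (a s) + s • γ

/-!
Both directions compare the two valuations on φ-expansions. If `[μ; φ, γ] = [μ; φ*, γ*]`,
evaluating at `φ` and `φ*` (each of which has value `μ` under the other augmentation when its
degree is smaller) forces `deg φ = deg φ*`, and then `γ* = min (μ (φ* - φ)) γ` and
`γ = min (μ (φ* - φ)) γ*`. Conversely, μ-minimality of `φ*` gives
`[μ; φ*, γ] (c g) ≥ μ c + [μ; φ*, γ] g` for `deg c < deg φ*`; since `φ = φ* + (φ - φ*)` with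
`μ (φ - φ*) ≥ γ`, this yields `[μ; φ*, γ] (a φ^s) ≥ μ a + s γ`, and the ultrametric inequality on
a φ-expansion gives `[μ; φ, γ] ≤ [μ; φ*, γ]`; the reverse bound is symmetric.
-/

set_option linter.unusedSectionVars false

theorem WithTop.eq_zero_of_add_self_eq_zero {x : WithTop Λ} (h : x + x = 0) : x = 0 := by
  induction x with
  | top => simp at h
  | coe y => exact_mod_cast two_nsmul_eq_zero.mp (by rw [two_nsmul]; exact_mod_cast h)

theorem WithTop.add_finset_inf {ι : Type*} (a : WithTop Λ) (s : Finset ι) (f : ι → WithTop Λ) :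
    a + s.inf f = s.inf fun i => a + f i :=
  Finset.apply_inf_eq_inf_comp_of_linearOrder (a + ·) (fun _ _ h => add_le_add_right h a) (add_top a)

theorem Finset.inf_range_succ {α : Type*} [SemilatticeInf α] [OrderTop α] (f : ℕ → α) (n : ℕ) :
    (range (n + 1)).inf f = f 0 ⊓ (range n).inf fun s => f (s + 1) := by
  rw [range_add_one', inf_insert, inf_map]
  rfl

theorem Finset.inf_le_apply_sum {ι M β : Type*} [AddCommMonoid M] [SemilatticeInf β] [OrderTop β]
    {w : M → β} (hw0 : w 0 = ⊤) (hw : ∀ x y, w x ⊓ w y ≤ w (x + y)) (s : Finset ι) (F : ι → M) :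
    (s.inf fun i => w (F i)) ≤ w (∑ i ∈ s, F i) := by
  induction s using Finset.cons_induction with
  | empty => simp [hw0]
  | cons i s hi ih => rw [inf_cons, sum_cons]; exact (inf_le_inf_left _ ih).trans (hw _ _)

theorem Finset.sum_range_succ_casesOn_mul_pow {R : Type*} [CommSemiring R] (c : R) (b : ℕ → R)
    (φ : R) (n : ℕ) :
    ∑ s ∈ range (n + 1), (Nat.casesOn s c b : R) * φ ^ s = c + φ * ∑ s ∈ range n, b s * φ ^ s := by
  rw [sum_range_succ', mul_sum, add_comm]
  simp only [pow_zero, mul_one, pow_succ']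
  congr 1
  exact sum_congr rfl fun s _ => by ring

namespace Polynomial

variable {R : Type*}

theorem Monic.degree_sub_lt [Ring R] [Nontrivial R] {p q : R[X]} (hp : p.Monic) (hq : q.Monic)
    (hd : p.degree = q.degree) : (p - q).degree < q.degree :=
  degree_sub_lt_right hd hq.ne_zero (hp.leadingCoeff.trans hq.leadingCoeff.symm)

theorem degree_mul_divByMonic_lt [Ring R] [NoZeroDivisors R] {φ c b : R[X]} (hm : φ.Monic)
    (hc : c.degree < φ.degree) (hb : b.degree < φ.degree) : (c * b /ₘ φ).degree < φ.degree := by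
  rcases eq_or_ne c 0 with rfl | hc0
  · simpa using hc
  rcases eq_or_ne b 0 with rfl | hb0
  · simpa using hb
  apply degree_lt_degree
  have := natDegree_lt_natDegree hc0 hc
  have := natDegree_lt_natDegree hb0 hb
  rw [natDegree_divByMonic _ hm, natDegree_mul hc0 hb0]
  omega

theorem exists_expansion [CommRing R] [Nontrivial R] {φ : R[X]} (hm : φ.Monic)
    (h0 : 0 < φ.degree) (N : ℕ) (f : R[X]) (hf : f.natDegree ≤ N) :
    ∃ a : ℕ → R[X], (∀ s, (a s).degree < φ.degree) ∧ f = ∑ s ∈ range (N + 1), a s * φ ^ s := by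
  induction N generalizing f with
  | zero =>
    refine ⟨fun _ => f, fun _ => ?_, by simp⟩
    exact (natDegree_eq_zero_iff_degree_le_zero.mp (Nat.le_zero.mp hf)).trans_lt h0
  | succ N ih =>
    have hφ := natDegree_pos_iff_degree_pos.mpr h0
    obtain ⟨b, hb, hfb⟩ := ih (f /ₘ φ) (by rw [natDegree_divByMonic f hm]; omega)
    refine ⟨fun s => Nat.casesOn s (f %ₘ φ) b, fun s => ?_, ?_⟩
    · cases s
      exacts [degree_modByMonic_lt f hm, hb _]
    · rw [sum_range_succ_casesOn_mul_pow, ← hfb, modByMonic_add_div]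

end Polynomial

section Valuations

variable {v : K → WithTop Λ} {μ : K[X] → WithTop Λ}

theorem IsVal.map_neg_one (hv : IsVal v) : v (-1) = 0 :=
  WithTop.eq_zero_of_add_self_eq_zero (by rw [← hv.2.2.1, neg_one_mul, neg_neg, hv.2.1])

namespace ExtVal

theorem map_zero (hμ : ExtVal v μ) (hv : IsVal v) : μ 0 = ⊤ := by
  rw [← C_0, hμ.2.2, hv.1]

theorem map_one (hμ : ExtVal v μ) (hv : IsVal v) : μ 1 = 0 := by
  rw [← C_1, hμ.2.2, hv.2.1]

theorem map_neg (hμ : ExtVal v μ) (hv : IsVal v) (f : K[X]) : μ (-f) = μ f := by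
  rw [← neg_one_mul, ← C_1, ← C_neg, hμ.1, hμ.2.2, hv.map_neg_one, zero_add]

theorem min_le_map_sub (hμ : ExtVal v μ) (hv : IsVal v) (f g : K[X]) :
    min (μ f) (μ g) ≤ μ (f - g) := by
  simpa only [sub_eq_add_neg, hμ.map_neg hv] using hμ.2.1 f (-g)

end ExtVal

theorem MuMinimal.map_mul_add_le_min (hv : IsVal v) (hμ : ExtVal v μ) {φ : K[X]}
    (hmin : MuMinimal μ φ) (q : K[X]) {r : K[X]} (hr : r.degree < φ.degree) :
    μ (φ * q + r) ≤ min (μ φ + μ q) (μ r) := by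
  have hle_r : μ (φ * q + r) ≤ μ r := by
    rcases eq_or_ne r 0 with rfl | hr0
    · rw [hμ.map_zero hv]
      exact le_top
    · have := hmin r hr0 hr
      simp only [MuDvd, not_exists, not_lt] at this
      simpa [add_comm, mul_comm] using this (-q)
  refine le_min ?_ hle_r
  calc μ (φ * q + r) ≤ min (μ (φ * q + r)) (μ r) := le_min le_rfl hle_r
    _ ≤ μ (φ * q + r - r) := hμ.min_le_map_sub hv _ _
    _ = μ φ + μ q := by rw [add_sub_cancel_right, hμ.1]

theorem KeyPoly.degree_pos (hv : IsVal v) (hμ : ExtVal v μ) {φ : K[X]} (hφ : KeyPoly μ φ) :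
    0 < φ.degree := by
  by_contra! h
  have hφ1 : φ = 1 :=
    eq_one_of_monic_natDegree_zero hφ.1 (natDegree_eq_zero_iff_degree_le_zero.mpr h)
  refine hφ.2.2.2.1 ⟨1, ?_⟩
  rw [hφ1, one_mul, sub_self, hμ.map_zero hv, hμ.map_one hv]
  exact WithTop.coe_lt_top 0

end Valuations

namespace AugVal

variable {v : K → WithTop Λ} {μ μ' : K[X] → WithTop Λ} {φ : K[X]} {γ : WithTop Λ}

theorem apply_of_degree_lt (ha : AugVal μ φ γ μ') {f : K[X]} (hf : f.degree < φ.degree) :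
    μ' f = μ f := by
  simpa using ha f 1 (fun _ => f) (fun _ => hf) (by simp)

theorem apply_zero (ha : AugVal μ φ γ μ') (h0 : 0 < φ.degree) : μ' 0 = ⊤ := by
  simpa using ha 0 0 (fun _ => 0) (fun _ => by rw [degree_zero]; exact bot_le.trans_lt h0) (by simp)

theorem min_le_apply_add (ha : AugVal μ φ γ μ') (hμ : ExtVal v μ) (hm : φ.Monic)
    (h0 : 0 < φ.degree) (f g : K[X]) : min (μ' f) (μ' g) ≤ μ' (f + g) := by
  obtain ⟨N, hfN, hgN⟩ : ∃ N, f.natDegree ≤ N ∧ g.natDegree ≤ N :=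
    ⟨_, le_max_left _ _, le_max_right _ _⟩
  obtain ⟨a, hadeg, hfa⟩ := exists_expansion hm h0 N f hfN
  obtain ⟨b, hbdeg, hgb⟩ := exists_expansion hm h0 N g hgN
  have hsum : f + g = ∑ s ∈ range (N + 1), (a s + b s) * φ ^ s := by
    rw [hfa, hgb, ← sum_add_distrib]
    simp only [add_mul]
  rw [ha f _ a hadeg hfa, ha g _ b hbdeg hgb,
    ha _ _ _ (fun s => (degree_add_le _ _).trans_lt (max_lt (hadeg s) (hbdeg s))) hsum,
    ← inf_inf]
  refine inf_mono_fun fun s _ => ?_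
  rw [Pi.inf_apply, min_add_add_right]
  exact add_le_add_left (hμ.2.1 _ _) _

theorem apply_add_mul (ha : AugVal μ φ γ μ') (hm : φ.Monic) (h0 : 0 < φ.degree) {c : K[X]}
    (hc : c.degree < φ.degree) (g : K[X]) : μ' (c + φ * g) = min (μ c) (γ + μ' g) := by
  obtain ⟨b, hbdeg, hgb⟩ := exists_expansion hm h0 _ g le_rfl
  have hexp : c + φ * g =
      ∑ s ∈ range (g.natDegree + 1 + 1), (Nat.casesOn s c b : K[X]) * φ ^ s := by
    rw [sum_range_succ_casesOn_mul_pow, ← hgb]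
  rw [ha _ _ _ (fun s => by cases s; exacts [hc, hbdeg _]) hexp, inf_range_succ,
    ha g _ b hbdeg hgb, WithTop.add_finset_inf]
  simp only [zero_smul, add_zero, succ_nsmul', add_left_comm]
  rfl

theorem apply_self_mul (ha : AugVal μ φ γ μ') (hv : IsVal v) (hμ : ExtVal v μ) (hm : φ.Monic)
    (h0 : 0 < φ.degree) (g : K[X]) : μ' (φ * g) = γ + μ' g := by
  have hc : (0 : K[X]).degree < φ.degree := by rw [degree_zero]; exact bot_le.trans_lt h0
  rw [← zero_add (φ * g), ha.apply_add_mul hm h0 hc, hμ.map_zero hv, top_inf_eq]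

theorem apply_one (ha : AugVal μ φ γ μ') (hv : IsVal v) (hμ : ExtVal v μ) (h0 : 0 < φ.degree) :
    μ' 1 = 0 := by
  rw [ha.apply_of_degree_lt (by rwa [degree_one]), hμ.map_one hv]

theorem apply_self (ha : AugVal μ φ γ μ') (hv : IsVal v) (hμ : ExtVal v μ) (hm : φ.Monic)
    (h0 : 0 < φ.degree) : μ' φ = γ := by
  rw [← mul_one φ, ha.apply_self_mul hv hμ hm h0, ha.apply_one hv hμ h0, add_zero]

theorem apply_add_self (ha : AugVal μ φ γ μ') (hv : IsVal v) (hμ : ExtVal v μ) (hm : φ.Monic)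
    (h0 : 0 < φ.degree) {c : K[X]} (hc : c.degree < φ.degree) : μ' (c + φ) = min (μ c) γ := by
  rw [← mul_one φ, ha.apply_add_mul hm h0 hc, ha.apply_one hv hμ h0, add_zero]

theorem add_le_apply_mul (ha : AugVal μ φ γ μ') (hv : IsVal v) (hμ : ExtVal v μ) (hm : φ.Monic)
    (h0 : 0 < φ.degree) (hmin : MuMinimal μ φ) (hγ : μ φ ≤ γ) {c : K[X]}
    (hc : c.degree < φ.degree) (g : K[X]) : μ c + μ' g ≤ μ' (c * g) := by
  obtain ⟨b, hbdeg, hgb⟩ := exists_expansion hm h0 _ g le_rfl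
  set n := g.natDegree + 1
  set q : ℕ → K[X] := fun s => c * b s /ₘ φ
  set r : ℕ → K[X] := fun s => c * b s %ₘ φ
  have hqdeg (s : ℕ) : (q s).degree < φ.degree := degree_mul_divByMonic_lt hm hc (hbdeg s)
  have hrdeg (s : ℕ) : (r s).degree < φ.degree := degree_modByMonic_lt _ hm
  have hbound (s : ℕ) : μ c + μ (b s) ≤ min (μ φ + μ (q s)) (μ (r s)) := by
    rw [← hμ.1, ← modByMonic_add_div (c * b s) φ, add_comm]
    exact hmin.map_mul_add_le_min hv hμ _ (hrdeg s)
  -- Dividing each digit `c * b s` by `φ` splits `c * g` into two φ-expansions `R + φ * Q`,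
  -- whose digits are controlled by the μ-minimality of `φ`.
  set R := ∑ s ∈ range n, r s * φ ^ s
  set Q := ∑ s ∈ range n, q s * φ ^ s
  have hcg : c * g = R + φ * Q := by
    rw [hgb, mul_sum, mul_sum, ← sum_add_distrib]
    refine sum_congr rfl fun s _ => ?_
    rw [← mul_assoc, ← modByMonic_add_div (c * b s) φ]
    ring
  calc μ c + μ' g ≤ min (μ' R) (γ + μ' Q) := by
        rw [ha g _ b hbdeg hgb, ha R _ r hrdeg rfl, ha Q _ q hqdeg rfl, WithTop.add_finset_inf,
          WithTop.add_finset_inf]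
        refine le_min (inf_mono_fun fun s _ => ?_) (inf_mono_fun fun s _ => ?_)
        · rw [← add_assoc]
          exact add_le_add_left ((hbound s).trans (min_le_right _ _)) _
        · rw [← add_assoc, ← add_assoc]
          exact add_le_add_left ((hbound s).trans ((min_le_left _ _).trans
            (add_le_add_left hγ _))) _
    _ = min (μ' R) (μ' (φ * Q)) := by rw [ha.apply_self_mul hv hμ hm h0]
    _ ≤ μ' (c * g) := hcg ▸ ha.min_le_apply_add hμ hm h0 _ _

theorem add_le_apply_mul_of_le_map_sub (ha : AugVal μ φ γ μ') (hv : IsVal v) (hμ : ExtVal v μ)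
    (hm : φ.Monic) (h0 : 0 < φ.degree) (hmin : MuMinimal μ φ) (hγ : μ φ ≤ γ) {h : K[X]}
    (hh : (h - φ).degree < φ.degree) (hδ : γ ≤ μ (h - φ)) (g : K[X]) :
    γ + μ' g ≤ μ' (h * g) := by
  have hsplit : h * g = φ * g + (h - φ) * g := by ring
  rw [hsplit]
  refine le_trans (le_min ?_ ?_) (ha.min_le_apply_add hμ hm h0 _ _)
  · rw [ha.apply_self_mul hv hμ hm h0]
  · exact (add_le_add_left hδ _).trans (ha.add_le_apply_mul hv hμ hm h0 hmin hγ hh g)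

theorem nsmul_le_apply_pow (ha : AugVal μ φ γ μ') (hv : IsVal v) (hμ : ExtVal v μ)
    (hm : φ.Monic) (h0 : 0 < φ.degree) (hmin : MuMinimal μ φ) (hγ : μ φ ≤ γ) {h : K[X]}
    (hh : (h - φ).degree < φ.degree) (hδ : γ ≤ μ (h - φ)) (n : ℕ) : n • γ ≤ μ' (h ^ n) := by
  induction n with
  | zero => rw [zero_nsmul, pow_zero, ha.apply_one hv hμ h0]
  | succ n ih =>
    rw [succ_nsmul', pow_succ']
    exact (add_le_add_right ih γ).trans
      (ha.add_le_apply_mul_of_le_map_sub hv hμ hm h0 hmin hγ hh hδ _)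

theorem le_of_augVal (ha : AugVal μ φ γ μ') {φs : K[X]} {μs' : K[X] → WithTop Λ}
    (has : AugVal μ φs γ μs') (hv : IsVal v) (hμ : ExtVal v μ) (hm : φ.Monic)
    (h0 : 0 < φ.degree) (hms : φs.Monic) (hmins : MuMinimal μ φs) (hγs : μ φs ≤ γ)
    (hdeg : φ.degree = φs.degree) (hδ : γ ≤ μ (φ - φs)) : μ' ≤ μs' := by
  intro f
  have h0s : 0 < φs.degree := hdeg ▸ h0
  have hsub : (φ - φs).degree < φs.degree := hm.degree_sub_lt hms hdeg
  obtain ⟨a, hadeg, hfa⟩ := exists_expansion hm h0 _ f le_rfl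
  have hterm (s : ℕ) : μ (a s) + s • γ ≤ μs' (a s * φ ^ s) :=
    calc μ (a s) + s • γ ≤ μ (a s) + μs' (φ ^ s) :=
          add_le_add_right (has.nsmul_le_apply_pow hv hμ hms h0s hmins hγs hsub hδ s) _
      _ ≤ μs' (a s * φ ^ s) := has.add_le_apply_mul hv hμ hms h0s hmins hγs (hdeg ▸ hadeg s) _
  calc μ' f = (range _).inf fun s => μ (a s) + s • γ := ha f _ a hadeg hfa
    _ ≤ (range _).inf fun s => μs' (a s * φ ^ s) := inf_mono_fun fun s _ => hterm s
    _ ≤ μs' (∑ s ∈ range (f.natDegree + 1), a s * φ ^ s) :=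
          inf_le_apply_sum (has.apply_zero h0s) (has.min_le_apply_add hμ hms h0s) _ _
    _ = μs' f := by rw [← hfa]

theorem degree_le_of_augVal (ha : AugVal μ φ γ μ') {φs : K[X]} {γs : WithTop Λ}
    (has : AugVal μ φs γs μ') (hv : IsVal v) (hμ : ExtVal v μ) (hm : φ.Monic)
    (h0 : 0 < φ.degree) (hγ : μ φ < γ) : φs.degree ≤ φ.degree := by
  by_contra! hlt
  exact hγ.ne ((has.apply_of_degree_lt hlt).symm.trans (ha.apply_self hv hμ hm h0))

theorem eq_and_le_map_sub_of_augVal (ha : AugVal μ φ γ μ') {φs : K[X]} {γs : WithTop Λ}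
    (has : AugVal μ φs γs μ') (hv : IsVal v) (hμ : ExtVal v μ) (hm : φ.Monic)
    (h0 : 0 < φ.degree) (hms : φs.Monic) (hdeg : φ.degree = φs.degree) :
    γ = γs ∧ γ ≤ μ (φs - φ) := by
  have h0s : 0 < φs.degree := hdeg ▸ h0
  have hγs_eq : γs = min (μ (φs - φ)) γ := by
    rw [← has.apply_self hv hμ hms h0s,
      ← ha.apply_add_self hv hμ hm h0 (hms.degree_sub_lt hm hdeg.symm), sub_add_cancel]
  have hγ_eq : γ = min (μ (φs - φ)) γs := by
    rw [← ha.apply_self hv hμ hm h0, ← neg_sub, hμ.map_neg hv,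
      ← has.apply_add_self hv hμ hms h0s (hm.degree_sub_lt hms hdeg), sub_add_cancel]
  have hγγs : γ = γs := le_antisymm (hγ_eq ▸ min_le_right _ _) (hγs_eq ▸ min_le_right _ _)
  subst hγγs
  exact ⟨rfl, min_eq_right_iff.mp hγs_eq.symm⟩

end AugVal

theorem unicity_ordinary_augmentation_general (v : K → WithTop Λ)
    (μ : Polynomial K → WithTop Λ) (hv : IsVal v) (hμ : ExtVal v μ)
    (φ φs : Polynomial K) (hφ : KeyPoly μ φ) (hφs : KeyPoly μ φs)
    (γ γs : WithTop Λ) (hγ : μ φ < γ) (hγs : μ φs < γs)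
    (μ' μs' : Polynomial K → WithTop Λ)
    (haug : AugVal μ φ γ μ') (haugs : AugVal μ φs γs μs') :
    μ' = μs' ↔ (φ.degree = φs.degree ∧ γ = γs ∧ γ ≤ μ (φs - φ)) := by
  have h0 := hφ.degree_pos hv hμ
  have h0s := hφs.degree_pos hv hμ
  constructor
  · rintro rfl
    have hdeg : φ.degree = φs.degree := le_antisymm
      (haugs.degree_le_of_augVal haug hv hμ hφs.1 h0s hγs)
      (haug.degree_le_of_augVal haugs hv hμ hφ.1 h0 hγ)
    exact ⟨hdeg, haug.eq_and_le_map_sub_of_augVal haugs hv hμ hφ.1 h0 hφs.1 hdeg⟩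
  · rintro ⟨hdeg, rfl, hδ⟩
    have hδ' : γ ≤ μ (φ - φs) := by rwa [← neg_sub, hμ.map_neg hv]
    exact le_antisymm
      (haug.le_of_augVal haugs hv hμ hφ.1 h0 hφs.1 hφs.2.1 hγs.le hdeg hδ')
      (haugs.le_of_augVal haug hv hμ hφs.1 h0s hφ.1 hφ.2.1 hγ.le hdeg.symm hδ)

/-- `[μ; φ, γ] = [μ; φ*, γ*]` iff `deg φ = deg φ*`, `γ = γ*` and
`μ(φ* − φ) ≥ γ`. -/
theorem unicity_ordinary_augmentation (v : K → WithTop Λ)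
    (μ : Polynomial K → WithTop Λ) (hv : IsVal v) (hμ : ExtVal v μ)
    (hsupp : ∀ f : Polynomial K, f ≠ 0 → μ f ≠ ⊤)
    (φ φs : Polynomial K) (hφ : KeyPoly μ φ) (hφs : KeyPoly μ φs)
    (γ γs : WithTop Λ) (hγ : μ φ < γ) (hγs : μ φs < γs)
    (μ' μs' : Polynomial K → WithTop Λ)
    (haug : AugVal μ φ γ μ') (haugs : AugVal μ φs γs μs') :
    μ' = μs' ↔ (φ.degree = φs.degree ∧ γ = γs ∧ γ ≤ μ (φs - φ)) :=
  unicity_ordinary_augmentation_general v μ hv hμ φ φs hφ hφs γ γs hγ hγs μ' μs' haug haugs
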